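/- arXiv:1802.04555 — 2 statements merged into one kernel-verified Lean document; each statement's English description precedes it below -/
import Mathlib

section
/- Let R be a finite set and for each v ∈ R let f_v : 𝒳 → ℝ take values in [0,1] and be monotone nonincreasing and DR-supermodular. Then the function x ↦ ∏_{v∈R} f_v(x) is nonnegative, monotone nonincreasing, and DR-supermodular. -/
/-!
Write `Δf(x) = f(x + u) - f(x)`. The product rule
`Δ(fg)(x) = f(x + u) Δg(x) + g(x) Δf(x)` reduces DR-supermodularity of `fg` to that of `f` and `g`:
both increments are nonpositive and become less negative from `x` to `y ≥ x`, while the nonnegative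
weights `f(x + u)` and `g(x)` can only shrink. Induction over `R` then handles finite products.
-/

/-- `x` lies in the lattice `𝒳`: each coordinate is a nonnegative integer multiple of `δ`. -/
def InLattice {d : ℕ} (δ : ℝ) (x : Fin d → ℝ) : Prop := ∀ i, ∃ n : ℕ, x i = n * δ

/-- The `i`-th standard unit vector of `ℝ^d`. -/
def eVec {d : ℕ} (i : Fin d) : Fin d → ℝ := Pi.single i 1

section DRSupermodular

variable {α ι 𝕜 : Type*} [CommRing 𝕜] [PartialOrder 𝕜] [IsOrderedRing 𝕜]

theorem antitoneOn_finset_prod [Preorder α] {s : Set α} {V : Type*} {R : Finset V} {f : V → α → 𝕜}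
    (hf₀ : ∀ v ∈ R, ∀ x ∈ s, 0 ≤ f v x) (hf_anti : ∀ v ∈ R, AntitoneOn (f v) s) :
    AntitoneOn (fun x => ∏ v ∈ R, f v x) s := fun _ hx _ hy hxy =>
  Finset.prod_le_prod (fun v hv => hf₀ v hv _ hy) fun v hv => hf_anti v hv hx hy hxy

variable [AddCommMonoid α] [PartialOrder α] [IsOrderedAddMonoid α]

def DRSupermodularOn (f : α → 𝕜) (s : Set α) (u : ι → α) : Prop :=
  ∀ x ∈ s, ∀ y ∈ s, x ≤ y → ∀ i, f (x + u i) - f x ≤ f (y + u i) - f y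

variable {s : Set α} {u : ι → α}

theorem DRSupermodularOn.mul {f g : α → 𝕜} (hs : ∀ x ∈ s, ∀ i, x + u i ∈ s) (hu : ∀ i, 0 ≤ u i)
    (hf₀ : ∀ x ∈ s, 0 ≤ f x) (hg₀ : ∀ x ∈ s, 0 ≤ g x)
    (hf_anti : AntitoneOn f s) (hg_anti : AntitoneOn g s)
    (hf : DRSupermodularOn f s u) (hg : DRSupermodularOn g s u) :
    DRSupermodularOn (f * g) s u := by
  intro x hx y hy hxy i
  have hyu := hs y hy i
  have hΔf_y : f (y + u i) - f y ≤ 0 :=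
    sub_nonpos.2 (hf_anti hy hyu (le_add_of_nonneg_right (hu i)))
  have hΔg_y : g (y + u i) - g y ≤ 0 :=
    sub_nonpos.2 (hg_anti hy hyu (le_add_of_nonneg_right (hu i)))
  have hf_step : f (y + u i) ≤ f (x + u i) :=
    hf_anti (hs x hx i) hyu (add_le_add_left hxy (u i))
  have hΔg : f (x + u i) * (g (x + u i) - g x) ≤ f (y + u i) * (g (y + u i) - g y) :=
    calc f (x + u i) * (g (x + u i) - g x)
        ≤ f (y + u i) * (g (x + u i) - g x) :=
          mul_le_mul_of_nonpos_right hf_step ((hg x hx y hy hxy i).trans hΔg_y)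
      _ ≤ f (y + u i) * (g (y + u i) - g y) :=
          mul_le_mul_of_nonneg_left (hg x hx y hy hxy i) (hf₀ _ hyu)
  have hΔf : g x * (f (x + u i) - f x) ≤ g y * (f (y + u i) - f y) :=
    calc g x * (f (x + u i) - f x)
        ≤ g y * (f (x + u i) - f x) :=
          mul_le_mul_of_nonpos_right (hg_anti hx hy hxy) ((hf x hx y hy hxy i).trans hΔf_y)
      _ ≤ g y * (f (y + u i) - f y) :=
          mul_le_mul_of_nonneg_left (hf x hx y hy hxy i) (hg₀ y hy)
  calc (f * g) (x + u i) - (f * g) x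
      = f (x + u i) * (g (x + u i) - g x) + g x * (f (x + u i) - f x) := by
        simp only [Pi.mul_apply]; ring
    _ ≤ f (y + u i) * (g (y + u i) - g y) + g y * (f (y + u i) - f y) := add_le_add hΔg hΔf
    _ = (f * g) (y + u i) - (f * g) y := by simp only [Pi.mul_apply]; ring

theorem DRSupermodularOn.finset_prod {V : Type*} {R : Finset V} {f : V → α → 𝕜}
    (hs : ∀ x ∈ s, ∀ i, x + u i ∈ s) (hu : ∀ i, 0 ≤ u i)
    (hf₀ : ∀ v ∈ R, ∀ x ∈ s, 0 ≤ f v x) (hf_anti : ∀ v ∈ R, AntitoneOn (f v) s)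
    (hf : ∀ v ∈ R, DRSupermodularOn (f v) s u) :
    DRSupermodularOn (fun x => ∏ v ∈ R, f v x) s u := by
  induction R using Finset.cons_induction with
  | empty => intro x _ y _ _ i; simp
  | cons a R ha ih =>
    simp only [Finset.forall_mem_cons] at hf₀ hf_anti hf
    have hprod := DRSupermodularOn.mul hs hu hf₀.1
      (fun x hx => Finset.prod_nonneg fun v hv => hf₀.2 v hv x hx) hf_anti.1
      (antitoneOn_finset_prod hf₀.2 hf_anti.2) hf.1 (ih hf₀.2 hf_anti.2 hf.2)
    intro x hx y hy hxy i
    simpa only [Finset.prod_cons, Pi.mul_apply] using hprod x hx y hy hxy i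

end DRSupermodular

theorem InLattice.add_smul_eVec {d : ℕ} {δ : ℝ} {x : Fin d → ℝ} (hx : InLattice δ x) (i : Fin d) :
    InLattice δ (x + δ • eVec i) := by
  intro j
  obtain ⟨n, hn⟩ := hx j
  refine ⟨n + if j = i then 1 else 0, ?_⟩
  simp only [Pi.add_apply, Pi.smul_apply, eVec, Pi.single_apply, hn]
  split_ifs <;> push_cast <;> ring

theorem finprod_nonincreasing_DRsupermodular_general {d : ℕ} (δ : ℝ) (hδ : 0 < δ)
    {V : Type*} (R : Finset V) (f : V → (Fin d → ℝ) → ℝ)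
    (hrange : ∀ v ∈ R, ∀ x, InLattice δ x → f v x ∈ Set.Icc (0 : ℝ) 1)
    (hanti : ∀ v ∈ R, ∀ x y, InLattice δ x → InLattice δ y → x ≤ y → f v y ≤ f v x)
    (hsuper : ∀ v ∈ R, ∀ x y, InLattice δ x → InLattice δ y → x ≤ y → ∀ i : Fin d,
      f v (x + δ • eVec i) - f v x ≤ f v (y + δ • eVec i) - f v y) :
    (∀ x, InLattice δ x → 0 ≤ ∏ v ∈ R, f v x) ∧
    (∀ x y, InLattice δ x → InLattice δ y → x ≤ y →
      (∏ v ∈ R, f v y) ≤ ∏ v ∈ R, f v x) ∧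
    (∀ x y, InLattice δ x → InLattice δ y → x ≤ y → ∀ i : Fin d,
      (∏ v ∈ R, f v (x + δ • eVec i)) - (∏ v ∈ R, f v x) ≤
      (∏ v ∈ R, f v (y + δ • eVec i)) - (∏ v ∈ R, f v y)) := by
  have hf₀ : ∀ v ∈ R, ∀ x ∈ {x | InLattice δ x}, 0 ≤ f v x := fun v hv x hx => (hrange v hv x hx).1
  have hf_anti : ∀ v ∈ R, AntitoneOn (f v) {x | InLattice δ x} :=
    fun v hv x hx y hy hxy => hanti v hv x y hx hy hxy
  have hstep : ∀ i : Fin d, 0 ≤ δ • eVec i :=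
    fun i => smul_nonneg hδ.le (Pi.single_nonneg.2 zero_le_one)
  have hDR : DRSupermodularOn (fun x => ∏ v ∈ R, f v x) {x | InLattice δ x} (δ • eVec ·) :=
    DRSupermodularOn.finset_prod (fun x hx i => InLattice.add_smul_eVec hx i) hstep hf₀ hf_anti
      fun v hv x hx y hy hxy i => hsuper v hv x y hx hy hxy i
  exact ⟨fun x hx => Finset.prod_nonneg fun v hv => hf₀ v hv x hx,
    fun x y hx hy hxy => antitoneOn_finset_prod hf₀ hf_anti hx hy hxy,
    fun x y hx hy hxy => hDR x hx y hy hxy⟩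

/-- Let `R` be a finite set and for each `v ∈ R` let `f v : 𝒳 → ℝ` take values in `[0,1]`
and be monotone nonincreasing and DR-supermodular. Then `x ↦ ∏ v ∈ R, f v x` is
nonnegative, monotone nonincreasing, and DR-supermodular. -/
theorem finprod_nonincreasing_DRsupermodular {d : ℕ} (hd : 1 ≤ d) (δ : ℝ) (hδ : 0 < δ)
    {V : Type*} (R : Finset V) (f : V → (Fin d → ℝ) → ℝ)
    (hrange : ∀ v ∈ R, ∀ x, InLattice δ x → f v x ∈ Set.Icc (0 : ℝ) 1)
    (hanti : ∀ v ∈ R, ∀ x y, InLattice δ x → InLattice δ y → x ≤ y → f v y ≤ f v x)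
    (hsuper : ∀ v ∈ R, ∀ x y, InLattice δ x → InLattice δ y → x ≤ y → ∀ i : Fin d,
      f v (x + δ • eVec i) - f v x ≤ f v (y + δ • eVec i) - f v y) :
    (∀ x, InLattice δ x → 0 ≤ ∏ v ∈ R, f v x) ∧
    (∀ x y, InLattice δ x → InLattice δ y → x ≤ y →
      (∏ v ∈ R, f v y) ≤ ∏ v ∈ R, f v x) ∧
    (∀ x y, InLattice δ x → InLattice δ y → x ≤ y → ∀ i : Fin d,
      (∏ v ∈ R, f v (x + δ • eVec i)) - (∏ v ∈ R, f v x) ≤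
      (∏ v ∈ R, f v (y + δ • eVec i)) - (∏ v ∈ R, f v y)) :=
  finprod_nonincreasing_DRsupermodular_general δ hδ R f hrange hanti hsuper
end

section
/- Let f : 𝒳 → ℝ be nonnegative, monotone, and DR-submodular, and let K ∈ ℕ with K ≥ 1 and budget k = K·δ. Define the lattice-greedy sequence by x⁰ = 0 and, for t = 1, …, K, x^t = x^{t−1} + δe_{j_t} where j_t ∈ argmax_{j∈[d]} f(x^{t−1} + δe_j). Then f(x^K) ≥ (1 − 1/e) · max{ f(y) : y ∈ 𝒳, Σ_{i∈[d]} y_i ≤ k }. -/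
lemma eVec_apply {d : ℕ} (i j : Fin d) : eVec i j = if j = i then 1 else 0 := by
  simp [eVec, Pi.single_apply]

lemma lattice_nonneg {d : ℕ} {δ : ℝ} (hδ : 0 < δ) {x : Fin d → ℝ} (hx : InLattice δ x) :
    ∀ i, 0 ≤ x i := fun i => by
  obtain ⟨n, hn⟩ := hx i
  rw [hn]; positivity

lemma lattice_add_step {d : ℕ} {δ : ℝ} {x : Fin d → ℝ} (hx : InLattice δ x) (j : Fin d) :
    InLattice δ (x + δ • eVec j) := by
  intro i
  obtain ⟨n, hn⟩ := hx i
  by_cases h : i = j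
  · subst h
    refine ⟨n + 1, ?_⟩
    simp only [Pi.add_apply, Pi.smul_apply, smul_eq_mul, eVec_apply, if_pos rfl, mul_one, hn]
    push_cast; ring
  · exact ⟨n, by simp [hn, eVec_apply, h]⟩

lemma le_add_step {d : ℕ} {δ : ℝ} (hδ : 0 < δ) (x : Fin d → ℝ) (j : Fin d) :
    x ≤ x + δ • eVec j := by
  intro i
  simp only [Pi.add_apply, Pi.smul_apply, smul_eq_mul, eVec_apply]
  by_cases h : i = j <;> simp [h] <;> positivity

/-- Key chain lemma: any lattice point `b ≥ c`, reachable in at most `N` unit steps,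
has value at most `f c + N * g` where `g` bounds all single-step marginals at `c`. -/
lemma key_chain {d : ℕ} {δ : ℝ} (hδ : 0 < δ) (f : (Fin d → ℝ) → ℝ)
    (hsub : ∀ x y : Fin d → ℝ, InLattice δ x → InLattice δ y → x ≤ y → ∀ i : Fin d,
      f (y + δ • eVec i) - f y ≤ f (x + δ • eVec i) - f x)
    (c : Fin d → ℝ) (hc : InLattice δ c) (g : ℝ) (hg : 0 ≤ g)
    (hgm : ∀ j : Fin d, f (c + δ • eVec j) - f c ≤ g) :
    ∀ N : ℕ, ∀ b : Fin d → ℝ, InLattice δ b → c ≤ b →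
      (∑ i, b i) ≤ (∑ i, c i) + N * δ → f b - f c ≤ N * g := by
  intro N
  induction N with
  | zero =>
    intro b hb hcb hsum
    have hbc : b = c := by
      funext i
      have h1 : ∑ i, (b i - c i) ≤ 0 := by
        rw [Finset.sum_sub_distrib]
        simp only [Nat.cast_zero, zero_mul, add_zero] at hsum
        linarith
      have h2 : ∀ i ∈ Finset.univ, (0:ℝ) ≤ b i - c i := fun i _ => by
        have := hcb i; linarith
      have h3 : ∑ i, (b i - c i) = 0 :=
        le_antisymm h1 (Finset.sum_nonneg h2)
      have := (Finset.sum_eq_zero_iff_of_nonneg h2).mp h3 i (Finset.mem_univ i)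
      linarith
    rw [hbc]; simp
  | succ N ih =>
    intro b hb hcb hsum
    by_cases hbc : b = c
    · rw [hbc]; simp; positivity
    · -- find a coordinate where b i > c i
      have : ∃ i, c i < b i := by
        by_contra h
        push_neg at h
        exact hbc (funext fun i => le_antisymm (h i) (hcb i))
      obtain ⟨i, hi⟩ := this
      obtain ⟨n, hn⟩ := hb i
      obtain ⟨m, hm⟩ := hc i
      have hmn : m < n := by
        by_contra h
        push_neg at h
        have : (n:ℝ) * δ ≤ m * δ := by
          apply mul_le_mul_of_nonneg_right _ hδ.le
          exact_mod_cast h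
        rw [hn, hm] at hi; linarith
      have hn1 : 1 ≤ n := by omega
      set b' : Fin d → ℝ := Function.update b i (b i - δ) with hb'def
      have hbb' : b = b' + δ • eVec i := by
        funext j
        by_cases h : j = i
        · subst h
          simp [hb'def, Function.update_self, eVec_apply]
        · simp [hb'def, Function.update_of_ne h, eVec_apply, h]
      have hb'lat : InLattice δ b' := by
        intro j
        by_cases h : j = i
        · subst h
          refine ⟨n - 1, ?_⟩
          simp only [hb'def, Function.update_self, hn]
          have : ((n - 1 : ℕ) : ℝ) = (n:ℝ) - 1 := by
            push_cast [Nat.cast_sub hn1]; ring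
          rw [this]; ring
        · obtain ⟨p, hp⟩ := hb j
          exact ⟨p, by simp [hb'def, Function.update_of_ne h, hp]⟩
      have hcb' : c ≤ b' := by
        intro j
        by_cases h : j = i
        · subst h
          simp only [hb'def, Function.update_self, hn, hm]
          have : (m:ℝ) + 1 ≤ (n:ℝ) := by exact_mod_cast hmn
          nlinarith
        · simp only [hb'def, Function.update_of_ne h]
          exact hcb j
      have hsum' : (∑ j, b' j) ≤ (∑ j, c j) + N * δ := by
        have hsplit := Finset.sum_erase_add Finset.univ b (Finset.mem_univ i)
        have : (∑ j, b' j) = (∑ j, b j) - δ := by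
          rw [hb'def, Finset.sum_update_of_mem (Finset.mem_univ i),
            Finset.sdiff_singleton_eq_erase]
          linarith
        rw [this]
        push_cast at hsum ⊢
        linarith
      have h1 : f b' - f c ≤ N * g := ih b' hb'lat hcb' hsum'
      have h2 : f b - f b' ≤ g := by
        have := hsub c b' hc hb'lat hcb' i
        have h3 := hgm i
        rw [← hbb'] at this
        linarith
      push_cast
      linarith

/-- Lattice greedy guarantee: for `f : 𝒳 → ℝ` nonnegative, monotone, DR-submodular, the
lattice-greedy sequence with `K = k·δ⁻¹` steps satisfies
`f(x^K) ≥ (1 − 1/e) · max{ f(y) : y ∈ 𝒳, Σᵢ yᵢ ≤ k }`. -/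
theorem lattice_greedy_approximation {d : ℕ} (hd : 1 ≤ d) (δ : ℝ) (hδ : 0 < δ)
    (f : (Fin d → ℝ) → ℝ)
    (hnonneg : ∀ x : Fin d → ℝ, InLattice δ x → 0 ≤ f x)
    (hmono : ∀ x y : Fin d → ℝ, InLattice δ x → InLattice δ y → x ≤ y → f x ≤ f y)
    (hsub : ∀ x y : Fin d → ℝ, InLattice δ x → InLattice δ y → x ≤ y → ∀ i : Fin d,
      f (y + δ • eVec i) - f y ≤ f (x + δ • eVec i) - f x)
    (K : ℕ) (hK : 1 ≤ K) (k : ℝ) (hk : k = (K : ℝ) * δ)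
    (x : ℕ → Fin d → ℝ) (hx0 : x 0 = 0)
    (hgreedy : ∀ t < K, ∃ j : Fin d,
      (∀ j' : Fin d, f (x t + δ • eVec j') ≤ f (x t + δ • eVec j)) ∧
      x (t + 1) = x t + δ • eVec j) :
    ∀ y : Fin d → ℝ, InLattice δ y → (∑ i : Fin d, y i) ≤ k →
      (1 - 1 / Real.exp 1) * f y ≤ f (x K) := by
  intro y hy hyk
  have hKpos : (0:ℝ) < K := by exact_mod_cast hK
  -- lattice membership of greedy iterates
  have hxlat : ∀ t ≤ K, InLattice δ (x t) := by
    intro t ht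
    induction t with
    | zero => intro i; exact ⟨0, by simp [hx0]⟩
    | succ t ih =>
      obtain ⟨j, _, hxe⟩ := hgreedy t (by omega)
      rw [hxe]
      exact lattice_add_step (ih (by omega)) j
  -- per-step progress
  have hstep : ∀ t < K, f y - f (x t) ≤ K * (f (x (t+1)) - f (x t)) := by
    intro t ht
    obtain ⟨j, hj, hxe⟩ := hgreedy t ht
    have hclat := hxlat t (by omega)
    have hc1lat : InLattice δ (x (t+1)) := by
      rw [hxe]; exact lattice_add_step hclat j
    set g := f (x (t+1)) - f (x t) with hgdef
    have hg : 0 ≤ g := by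
      have := hmono (x t) (x (t+1)) hclat hc1lat (by rw [hxe]; exact le_add_step hδ _ j)
      linarith
    have hgm : ∀ j' : Fin d, f (x t + δ • eVec j') - f (x t) ≤ g := by
      intro j'
      have h2 : f (x t + δ • eVec j') ≤ f (x (t + 1)) := by rw [hxe]; exact hj j'
      rw [hgdef]
      linarith
    set b : Fin d → ℝ := fun i => max (x t i) (y i) with hbdef
    have hblat : InLattice δ b := by
      intro i
      obtain ⟨n, hn⟩ := hclat i
      obtain ⟨m, hm⟩ := hy i
      refine ⟨max n m, ?_⟩
      simp only [hbdef, hn, hm]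
      rcases le_total n m with h | h
      · have h' : (n:ℝ) * δ ≤ (m:ℝ) * δ :=
          mul_le_mul_of_nonneg_right (by exact_mod_cast h) hδ.le
        rw [sup_eq_right.mpr h, sup_eq_right.mpr h']
      · have h' : (m:ℝ) * δ ≤ (n:ℝ) * δ :=
          mul_le_mul_of_nonneg_right (by exact_mod_cast h) hδ.le
        rw [sup_eq_left.mpr h, sup_eq_left.mpr h']
    have hcb : x t ≤ b := fun i => le_max_left _ _
    have hyb : y ≤ b := fun i => le_max_right _ _
    have hsumb : (∑ i, b i) ≤ (∑ i, x t i) + K * δ := by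
      have h1 : ∀ i, b i ≤ x t i + y i := by
        intro i
        have h2 := lattice_nonneg hδ hclat i
        have h3 := lattice_nonneg hδ hy i
        simp only [hbdef]
        rcases le_total (x t i) (y i) with h | h
        · rw [max_eq_right h]; linarith
        · rw [max_eq_left h]; linarith
      calc (∑ i, b i) ≤ ∑ i, (x t i + y i) := Finset.sum_le_sum fun i _ => h1 i
        _ = (∑ i, x t i) + ∑ i, y i := Finset.sum_add_distrib
        _ ≤ (∑ i, x t i) + K * δ := by rw [hk] at hyk; linarith
    have hmain := key_chain hδ f hsub (x t) hclat g hg hgm K b hblat hcb hsumb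
    have hfy : f y ≤ f b := hmono y b hy hblat hyb
    linarith
  -- geometric decay
  have hrec : ∀ t ≤ K, f y - f (x t) ≤ (1 - 1/(K:ℝ))^t * (f y - f (x 0)) := by
    intro t ht
    induction t with
    | zero => simp
    | succ t ih =>
      have ih' := ih (by omega)
      have hs := hstep t (by omega)
      have hfac : 0 ≤ 1 - 1/(K:ℝ) := by
        have : 1/(K:ℝ) ≤ 1 := by
          rw [div_le_one hKpos]; exact_mod_cast hK
        linarith
      have h1 : f y - f (x (t+1)) ≤ (1 - 1/(K:ℝ)) * (f y - f (x t)) := by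
        have hK' : (K:ℝ) ≠ 0 := ne_of_gt hKpos
        have h2 : (K:ℝ) * (f y - f (x (t+1))) ≤
            (K:ℝ) * ((1 - 1/(K:ℝ)) * (f y - f (x t))) := by
          have h3 : (K:ℝ) * ((1 - 1/(K:ℝ)) * (f y - f (x t))) =
              (K:ℝ) * (f y - f (x t)) - (f y - f (x t)) := by
            field_simp
          rw [h3]; linarith
        exact le_of_mul_le_mul_left h2 hKpos
      calc f y - f (x (t+1)) ≤ (1 - 1/(K:ℝ)) * (f y - f (x t)) := h1
        _ ≤ (1 - 1/(K:ℝ)) * ((1 - 1/(K:ℝ))^t * (f y - f (x 0))) :=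
            mul_le_mul_of_nonneg_left ih' hfac
        _ = (1 - 1/(K:ℝ))^(t+1) * (f y - f (x 0)) := by ring
  have hfinal := hrec K le_rfl
  have hfac : 0 ≤ 1 - 1/(K:ℝ) := by
    have : 1/(K:ℝ) ≤ 1 := by rw [div_le_one hKpos]; exact_mod_cast hK
    linarith
  have hexp : (1 - 1/(K:ℝ))^K ≤ Real.exp (-1) := by
    have h1 : 1 - 1/(K:ℝ) ≤ Real.exp (-(1/(K:ℝ))) := by
      have := Real.add_one_le_exp (-(1/(K:ℝ)))
      linarith
    calc (1 - 1/(K:ℝ))^K ≤ (Real.exp (-(1/(K:ℝ))))^K := pow_le_pow_left₀ hfac h1 K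
      _ = Real.exp ((K:ℝ) * (-(1/(K:ℝ)))) := (Real.exp_nat_mul _ K).symm
      _ = Real.exp (-1) := by
          congr 1
          field_simp
  have hfy0 : 0 ≤ f y := hnonneg y hy
  have hf0 : 0 ≤ f (x 0) := hnonneg (x 0) (hxlat 0 (by omega))
  have hepos : (0:ℝ) < Real.exp 1 := Real.exp_pos 1
  have hexpinv : Real.exp (-1) = 1 / Real.exp 1 := by
    rw [Real.exp_neg]; field_simp
  rcases le_or_gt (f y - f (x 0)) 0 with h | h
  · have h2 : (1 - 1/(K:ℝ))^K * (f y - f (x 0)) ≤ 0 :=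
      mul_nonpos_of_nonneg_of_nonpos (pow_nonneg hfac K) h
    have h3 : f y ≤ f (x K) := by linarith
    have h4 : (1 - 1 / Real.exp 1) * f y ≤ f y := by
      have : 0 < 1 / Real.exp 1 := by positivity
      nlinarith
    linarith
  · have h2 : (1 - 1/(K:ℝ))^K * (f y - f (x 0)) ≤ Real.exp (-1) * (f y - f (x 0)) :=
      mul_le_mul_of_nonneg_right hexp h.le
    have h3 : Real.exp (-1) * (f y - f (x 0)) ≤ Real.exp (-1) * f y := by
      have : 0 < Real.exp (-1) := Real.exp_pos _
      nlinarith
    rw [hexpinv] at h2 h3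
    have h5 : f y - f (x K) ≤ (1 / Real.exp 1) * f y := by linarith
    linarith
end
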